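/- There exist a finitely branching LMC and two ε-bisimilar states s, t in it such that |Pr_s(◇ g) − Pr_t(◇ g)| = ε · 𝔼_s(N), i.e., the bound |Pr_s(◇ g) − Pr_t(◇ g)| ≤ ε·𝔼_s(N) is tight. Concretely, for p ∈ (0,1) and 0 < ε < p/2, take the five-state LMC with states s, q, r, t (with q labeled g, r labeled f, s and t labeled a) where P(s)(s) = 1−p, P(s)(q) = p/2, P(s)(r) = p/2, P(t)(t) = 1−p, P(t)(q) = p/2 − ε, P(t)(r) = p/2 + ε, and q, r absorbing. Then s ∼_ε t, Pr_s(◇g) = 1/2, Pr_t(◇g) = 1/2 − ε/p, and 𝔼_s(N) = 1/p. -/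

import Mathlib

open scoped BigOperators

attribute [local instance] Classical.propDecidable

/-- Mass that a (sub)distribution `μ` assigns to a set `A`. -/
noncomputable def pmass {S : Type*} (μ : S → ℝ) (A : Set S) : ℝ := ∑' a : A, μ a

/-- L1-distance between two functions `S → ℝ`. -/
noncomputable def l1dist {S : Type*} (μ ν : S → ℝ) : ℝ := ∑' s, |μ s - ν s|

/-- `μ : S → ℝ` is a probability distribution. -/
def IsDistr {S : Type*} (μ : S → ℝ) : Prop :=
  (∀ s, 0 ≤ μ s) ∧ (∀ s, μ s ≤ 1) ∧ HasSum μ 1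

/-- Image of a set under a relation. -/
def relImg {S : Type*} (R : S → S → Prop) (A : Set S) : Set S := {t | ∃ s ∈ A, R s t}

/-- ε-bisimulation on a labeled Markov chain with transition function `P` and labeling `lab`. -/
def IsEpsBisim {S L : Type*} (P : S → S → ℝ) (lab : S → L) (ε : ℝ)
    (R : S → S → Prop) : Prop :=
  Reflexive R ∧ Symmetric R ∧
    ∀ s t, R s t → lab s = lab t ∧
      ∀ A : Set S, pmass (P s) A ≤ pmass (P t) (relImg R A) + ε

/-- ε-APB (approximate probabilistic bisimulation with precision ε). -/
def IsEpsAPB {S L : Type*} (P : S → S → ℝ) (lab : S → L) (ε : ℝ)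
    (R : S → S → Prop) : Prop :=
  Reflexive R ∧ Symmetric R ∧
    ∀ s t, R s t → lab s = lab t ∧
      ∀ A : Set S, relImg R A ⊆ A → |pmass (P s) A - pmass (P t) A| ≤ ε

/-- Weight of a finite path witnessing `B U A` starting at `s` and continuing along the list. -/
noncomputable def untilWeight {S : Type*} (P : S → S → ℝ) (B A : Set S) :
    S → List S → ℝ
  | s, [] => if s ∈ A then 1 else 0
  | s, t :: rest =>
      if s ∈ A then 0 else if s ∈ B then P s t * untilWeight P B A t rest else 0

/-- `Pr_s(B U A)`: probability of reaching `A` from `s` via states in `B`. -/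
noncomputable def untilProb {S : Type*} (P : S → S → ℝ) (B A : Set S) (s : S) : ℝ :=
  ∑' l : List S, untilWeight P B A s l

/-- `Pr_s(□C)`: probability of staying in `C` forever, `= 1 - Pr_s(C U Cᶜ)`. -/
noncomputable def boxProb {S : Type*} (P : S → S → ℝ) (C : Set S) (s : S) : ℝ :=
  1 - untilProb P C Cᶜ s

/-- Weak ε-bisimulation. -/
def IsWeakEpsBisim {S L : Type*} (P : S → S → ℝ) (lab : S → L) (ε : ℝ)
    (R : S → S → Prop) : Prop :=
  Reflexive R ∧ Symmetric R ∧
    ∀ s t, R s t → lab s = lab t ∧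
      ∀ A : Set S, untilProb P {u | lab u = lab s} A s ≤
        untilProb P {u | lab u = lab t} (relImg R A) t + ε

/-- Weak ε-bisimilarity of two states. -/
def WeakEpsBisimilar {S L : Type*} (P : S → S → ℝ) (lab : S → L) (ε : ℝ)
    (s t : S) : Prop :=
  ∃ R, IsWeakEpsBisim P lab ε R ∧ R s t

/-- Up-to-(n,ε)-bisimilarity. -/
def upTo {S L : Type*} (P : S → S → ℝ) (lab : S → L) (ε : ℝ) :
    ℕ → S → S → Prop
  | 0, _, _ => True
  | n + 1, s, t => lab s = lab t ∧
      ∀ A : Set S,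
        pmass (P s) A ≤ pmass (P t) (relImg (upTo P lab ε n) A) + ε ∧
        pmass (P t) A ≤ pmass (P s) (relImg (upTo P lab ε n) A) + ε

/-- Branching ε-bisimulation. -/
def IsBranchingEpsBisim {S L : Type*} (P : S → S → ℝ) (lab : S → L) (ε : ℝ)
    (R : S → S → Prop) : Prop :=
  Equivalence R ∧
    ∀ s t, R s t → lab s = lab t ∧
      ∀ A : Set S, relImg R A ⊆ A →
        |untilProb P {u | R s u} A s - untilProb P {u | R t u} A t| ≤ ε

/-- Transitive ε-bisimulation (equivalently, an ε-APB which is an equivalence). -/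
def IsTransEpsBisim {S L : Type*} (P : S → S → ℝ) (lab : S → L) (ε : ℝ)
    (R : S → S → Prop) : Prop :=
  Equivalence R ∧
    ∀ s t, R s t → lab s = lab t ∧
      ∀ A : Set S, relImg R A ⊆ A → |pmass (P s) A - pmass (P t) A| ≤ ε

/-- Exact probabilistic bisimulation. -/
def IsExactBisim {S L : Type*} (P : S → S → ℝ) (lab : S → L)
    (R : S → S → Prop) : Prop :=
  Equivalence R ∧
    ∀ s t, R s t → lab s = lab t ∧
      ∀ c, pmass (P s) {u | R c u} = pmass (P t) {u | R c u}

/-- `Pr_s(◇^{≤k} G)`: probability of reaching `G` from `s` within `k` steps. -/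
noncomputable def reachLe {S : Type*} (P : S → S → ℝ) (G : Set S) :
    ℕ → S → ℝ
  | 0, s => if s ∈ G then 1 else 0
  | k + 1, s => if s ∈ G then 1 else ∑' t, P s t * reachLe P G k t

/-!
If a state `u` can only loop, step into the target `q`, or step into an absorbing set avoiding the
target, then the paths reaching the target are exactly `uᵏq`, so its reachability probability is
the geometric series `P u q / (1 - P u u)`; likewise `1 - Pr_u(◇^{≤j})` is `(P u u)ʲ`, whose sum
is `𝔼_u(N) = 1 / (1 - P u u)`. In the example `s` and `t` share the self-loop `1 - p` and their exit
distributions differ by `ε`, so they are `ε`-bisimilar, yet their reachability probabilities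
differ by `ε / p`.
-/

def IsAbsorbing {S : Type*} (P : S → S → ℝ) (D : Set S) : Prop :=
  ∀ d ∈ D, ∀ v, P d v ≠ 0 → v ∈ D

lemma IsAbsorbing.mem_of_reflTransGen {S : Type*} {P : S → S → ℝ} {D : Set S}
    (hD : IsAbsorbing P D) {d v : S} (hd : d ∈ D)
    (hdv : Relation.ReflTransGen (fun a b => P a b ≠ 0) d v) : v ∈ D := by
  induction hdv with
  | refl => exact hd
  | tail _ hbc ih => exact hD _ ih _ hbc

lemma isDistr_of_sum_eq_one {S : Type*} [Fintype S] {μ : S → ℝ} (h0 : ∀ s, 0 ≤ μ s)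
    (h1 : ∑ s, μ s = 1) : IsDistr μ :=
  ⟨h0, fun s => h1 ▸ Finset.single_le_sum (fun t _ => h0 t) (Finset.mem_univ s),
    h1 ▸ hasSum_fintype μ⟩

lemma pmass_eq_sum_indicator {S : Type*} [Fintype S] (μ : S → ℝ) (A : Set S) :
    pmass μ A = ∑ x, A.indicator μ x := by
  rw [pmass, tsum_subtype, tsum_fintype]

lemma pmass_mono {S : Type*} [Fintype S] {μ : S → ℝ} (hμ : ∀ s, 0 ≤ μ s) {A B : Set S}
    (hAB : A ⊆ B) : pmass μ A ≤ pmass μ B := by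
  rw [pmass_eq_sum_indicator, pmass_eq_sum_indicator]
  exact Finset.sum_le_sum fun x _ => Set.indicator_le_indicator_of_subset hAB hμ x

section Until

variable {S : Type*} (P : S → S → ℝ) {B A : Set S}

lemma untilWeight_eq_zero_of_isAbsorbing {D : Set S} (hD : IsAbsorbing P D)
    (hDA : Disjoint D A) : ∀ (l : List S) (d : S), d ∈ D → untilWeight P B A d l = 0
  | [], d, hd => by simp [untilWeight, hDA.notMem_of_mem_left hd]
  | t :: l, d, hd => by
    by_cases hdt : P d t = 0
    · simp [untilWeight, hdt]
    · simp [untilWeight, untilWeight_eq_zero_of_isAbsorbing hD hDA l t (hD d hd t hdt)]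

variable {u q : S}

lemma untilWeight_replicate_append (huB : u ∈ B) (huA : u ∉ A) (hqA : q ∈ A) (k : ℕ) :
    untilWeight P B A u (List.replicate k u ++ [q]) = P u u ^ k * P u q := by
  induction k with
  | zero => simp [untilWeight, huA, huB, hqA]
  | succ k ih => simp [List.replicate_succ, untilWeight, huA, huB, ih, pow_succ]; ring

lemma untilWeight_eq_zero_of_notMem_range (huA : u ∉ A) (hqA : q ∈ A) {D : Set S}
    (hD : IsAbsorbing P D) (hDA : Disjoint D A) (hu : ∀ v, P u v ≠ 0 → v = u ∨ v = q ∨ v ∈ D)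
    (l : List S) (hl : l ∉ Set.range (fun k => List.replicate k u ++ [q])) :
    untilWeight P B A u l = 0 := by
  induction l with
  | nil => simp [untilWeight, huA]
  | cons t l ih =>
    by_cases hut : P u t = 0
    · simp [untilWeight, hut]
    rcases hu t hut with rfl | rfl | htD
    · have hl' : l ∉ Set.range (fun k => List.replicate k t ++ [q]) := by
        rintro ⟨k, rfl⟩
        exact hl ⟨k + 1, rfl⟩
      simp [untilWeight, ih hl']
    · cases l with
      | nil => exact absurd ⟨0, rfl⟩ hl
      | cons _ _ => simp [untilWeight, hqA]
    · simp [untilWeight, untilWeight_eq_zero_of_isAbsorbing P hD hDA l t htD]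

theorem untilProb_eq_div (huB : u ∈ B) (huA : u ∉ A) (hqA : q ∈ A) {D : Set S}
    (hD : IsAbsorbing P D) (hDA : Disjoint D A) (hu : ∀ v, P u v ≠ 0 → v = u ∨ v = q ∨ v ∈ D)
    (h0 : 0 ≤ P u u) (h1 : P u u < 1) :
    untilProb P B A u = P u q / (1 - P u u) := by
  have hinj : Function.Injective (fun k => List.replicate k u ++ [q]) := fun a b h => by
    simpa using congrArg List.length h
  have hgeom : HasSum (fun k => P u u ^ k * P u q) (P u q / (1 - P u u)) := by
    simpa [div_eq_mul_inv, mul_comm] using (hasSum_geometric_of_lt_one h0 h1).mul_right (P u q)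
  refine HasSum.tsum_eq ?_
  rw [← hinj.hasSum_iff (untilWeight_eq_zero_of_notMem_range P huA hqA hD hDA hu)]
  convert hgeom using 2 with k
  exact untilWeight_replicate_append P huB huA hqA k

end Until

section Reach

variable {S : Type*} (P : S → S → ℝ) {G : Set S} {u : S}

lemma reachLe_of_mem {v : S} (hv : v ∈ G) : ∀ k, reachLe P G k v = 1
  | 0 => by simp [reachLe, hv]
  | _ + 1 => by simp [reachLe, hv]

variable [Fintype S]

lemma reachLe_eq_one_sub_pow (huG : u ∉ G) (hsum : ∑ v, P u v = 1)
    (hu : ∀ v, v ≠ u → v ∉ G → P u v = 0) (k : ℕ) :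
    reachLe P G k u = 1 - P u u ^ k := by
  induction k with
  | zero => simp [reachLe, huG]
  | succ k ih =>
    have hterm : ∀ v,
        P u v * reachLe P G k v = P u v - if v = u then P u u ^ (k + 1) else 0 := by
      intro v
      by_cases hvu : v = u
      · subst hvu; rw [ih, if_pos rfl]; ring
      by_cases hvG : v ∈ G
      · simp [reachLe_of_mem P hvG, hvu]
      · simp [hu v hvu hvG, hvu]
    simp only [reachLe, if_neg huG, tsum_fintype, hterm, Finset.sum_sub_distrib, hsum,
      Finset.sum_ite_eq', Finset.mem_univ, if_true]

lemma hasSum_one_sub_reachLe (huG : u ∉ G) (hsum : ∑ v, P u v = 1)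
    (hu : ∀ v, v ≠ u → v ∉ G → P u v = 0) (h0 : 0 ≤ P u u) (h1 : P u u < 1) :
    HasSum (fun j => 1 - reachLe P G j u) (1 / (1 - P u u)) := by
  simpa [reachLe_eq_one_sub_pow P huG hsum hu] using hasSum_geometric_of_lt_one h0 h1

end Reach

section Example

variable (p ε : ℝ)

/-- States `0, 1, 2, 3` are `s, q, r, t`. -/
noncomputable def tightChain : Fin 4 → Fin 4 → ℝ :=
  ![![1 - p, p / 2, p / 2, 0],
    ![0, 1, 0, 0],
    ![0, 0, 1, 0],
    ![0, p / 2 - ε, p / 2 + ε, 1 - p]]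

/-- Labels `0, 1, 2` are `a, g, f`. -/
def tightLabel : Fin 4 → Fin 3 := ![0, 1, 2, 0]

def tightRel (a b : Fin 4) : Prop := a = b ∨ (a = 0 ∧ b = 3) ∨ (a = 3 ∧ b = 0)

variable {p ε}

lemma tightChain_nonneg (hp1 : p < 1) (hε0 : 0 < ε) (hεp : ε < p / 2) (u v : Fin 4) :
    0 ≤ tightChain p ε u v := by
  fin_cases u <;> fin_cases v <;> simp [tightChain] <;> linarith

lemma tightChain_sum (u : Fin 4) : ∑ v, tightChain p ε u v = 1 := by
  fin_cases u <;> simp [tightChain, Fin.sum_univ_four]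
  ring

lemma isAbsorbing_tightChain_two : IsAbsorbing (tightChain p ε) {2} := by
  rintro _ rfl v hv
  fin_cases v <;> simp_all [tightChain]

lemma tightLabel_eq_two_iff (hε0 : 0 < ε) (hεp : ε < p / 2) (u : Fin 4) :
    tightLabel u = 2 ↔ ¬ ∃ v, Relation.ReflTransGen (fun a b => tightChain p ε a b ≠ 0) u v ∧
      tightLabel v = 1 := by
  have hε : p / 2 - ε ≠ 0 := by linarith
  have hp : p / 2 ≠ 0 := by linarith
  fin_cases u
  · simpa [tightLabel] using ⟨1, .single (by simpa [tightChain] using hp), rfl⟩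
  · simpa [tightLabel] using ⟨1, .refl, rfl⟩
  · refine iff_of_true rfl ?_
    rintro ⟨v, hv, hv1⟩
    rw [isAbsorbing_tightChain_two.mem_of_reflTransGen rfl hv] at hv1
    exact absurd hv1 (by decide)
  · simpa [tightLabel] using ⟨1, .single (by simpa [tightChain] using hε), rfl⟩

lemma mem_relImg_tightRel_zero_iff (A : Set (Fin 4)) :
    0 ∈ relImg tightRel A ↔ 3 ∈ relImg tightRel A := by
  simp [relImg, tightRel, or_comm]

lemma pmass_fin_four (μ : Fin 4 → ℝ) (A : Set (Fin 4)) :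
    pmass μ A = A.indicator μ 0 + A.indicator μ 1 + A.indicator μ 2 + A.indicator μ 3 := by
  rw [pmass_eq_sum_indicator, Fin.sum_univ_four]

/-- On a set containing both or neither of `s` and `t` the self-loops cancel, leaving only the
`ε` shifted between `q` and `r`. -/
lemma tightChain_pmass_le_of_mem_zero_iff (hε0 : 0 < ε) {A : Set (Fin 4)}
    (hA : 0 ∈ A ↔ 3 ∈ A) :
    pmass (tightChain p ε 0) A ≤ pmass (tightChain p ε 3) A + ε ∧
      pmass (tightChain p ε 3) A ≤ pmass (tightChain p ε 0) A + ε := by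
  simp only [pmass_fin_four, Set.indicator]
  constructor <;> by_cases h3 : (3 : Fin 4) ∈ A <;> by_cases h1 : (1 : Fin 4) ∈ A <;>
    by_cases h2 : (2 : Fin 4) ∈ A <;> simp [tightChain, h1, h2, h3, hA] <;> linarith

lemma tightRel_isEpsBisim (hp1 : p < 1) (hε0 : 0 < ε) (hεp : ε < p / 2) :
    IsEpsBisim (tightChain p ε) tightLabel ε tightRel := by
  refine ⟨fun _ => Or.inl rfl, ?_, ?_⟩
  · rintro a b (rfl | ⟨rfl, rfl⟩ | ⟨rfl, rfl⟩) <;> simp [tightRel]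
  intro s t hst
  have hlab : tightLabel s = tightLabel t := by
    rcases hst with rfl | ⟨rfl, rfl⟩ | ⟨rfl, rfl⟩ <;> rfl
  refine ⟨hlab, fun A => ?_⟩
  have hmono : pmass (tightChain p ε s) A ≤ pmass (tightChain p ε s) (relImg tightRel A) :=
    pmass_mono (tightChain_nonneg hp1 hε0 hεp s) fun a ha => ⟨a, ha, Or.inl rfl⟩
  have hswap :=
    tightChain_pmass_le_of_mem_zero_iff (p := p) hε0 (mem_relImg_tightRel_zero_iff A)
  rcases hst with rfl | ⟨rfl, rfl⟩ | ⟨rfl, rfl⟩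
  · linarith
  · linarith [hswap.1]
  · linarith [hswap.2]

end Example

theorem unbounded_reach_bound_tight (p ε : ℝ)
    (hp0 : 0 < p) (hp1 : p < 1) (hε0 : 0 < ε) (hεp : ε < p / 2) :
    ∃ (S : Type) (_ : Fintype S) (L : Type) (P : S → S → ℝ) (lab : S → L)
      (g f : L) (s t : S),
      (∀ u, IsDistr (P u)) ∧
      (∃ u, lab u = g) ∧
      (∀ u, lab u = f ↔
        ¬ ∃ v, Relation.ReflTransGen (fun a b => P a b ≠ 0) u v ∧ lab v = g) ∧
      (∃ R, IsEpsBisim P lab ε R ∧ R s t) ∧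
      untilProb P Set.univ {u | lab u = g} s = 1 / 2 ∧
      untilProb P Set.univ {u | lab u = g} t = 1 / 2 - ε / p ∧
      HasSum (fun j : ℕ => 1 - reachLe P {u | lab u = g ∨ lab u = f} j s) (1 / p) ∧
      |untilProb P Set.univ {u | lab u = g} s -
        untilProb P Set.univ {u | lab u = g} t| = ε * (1 / p) := by
  have hdisj : Disjoint {(2 : Fin 4)} {u | tightLabel u = 1} := by
    simp [tightLabel]
  have hprob (u : Fin 4) (hu : u = 0 ∨ u = 3) :
      untilProb (tightChain p ε) Set.univ {u | tightLabel u = 1} u =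
        tightChain p ε u 1 / (1 - tightChain p ε u u) :=
    untilProb_eq_div _ trivial (by rcases hu with rfl | rfl <;> decide) rfl
      isAbsorbing_tightChain_two hdisj
      (fun v hv => by rcases hu with rfl | rfl <;> fin_cases v <;> simp_all [tightChain])
      (tightChain_nonneg hp1 hε0 hεp u u)
      (by rcases hu with rfl | rfl <;> simp [tightChain, hp0])
  have hs : untilProb (tightChain p ε) Set.univ {u | tightLabel u = 1} 0 = 1 / 2 := by
    rw [hprob 0 (.inl rfl)]; simp [tightChain]; field_simp
  have ht : untilProb (tightChain p ε) Set.univ {u | tightLabel u = 1} 3 = 1 / 2 - ε / p := by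
    rw [hprob 3 (.inr rfl)]; simp [tightChain]; field_simp
  have hN : HasSum (fun j => 1 - reachLe (tightChain p ε)
      {u | tightLabel u = 1 ∨ tightLabel u = 2} j 0) (1 / p) := by
    simpa [tightChain] using hasSum_one_sub_reachLe (tightChain p ε) (u := 0) (by decide)
      (tightChain_sum 0) (fun v h0 hG => by fin_cases v <;> simp_all [tightChain, tightLabel])
      (tightChain_nonneg hp1 hε0 hεp 0 0) (by simp [tightChain, hp0])
  refine ⟨Fin 4, inferInstance, Fin 3, tightChain p ε, tightLabel, 1, 2, 0, 3,
    fun u => isDistr_of_sum_eq_one (tightChain_nonneg hp1 hε0 hεp u) (tightChain_sum u),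
    ⟨1, rfl⟩, tightLabel_eq_two_iff hε0 hεp,
    ⟨tightRel, tightRel_isEpsBisim hp1 hε0 hεp, .inr (.inl ⟨rfl, rfl⟩)⟩, hs, ht, hN, ?_⟩
  rw [hs, ht, sub_sub_cancel, abs_of_pos (by positivity), div_eq_mul_one_div]
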